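/- A group homomorphism Φ : G_α → G_β is bijective if and only if Φ is of type I (Φ(ℤ^m) ⊆ ℤ^{m'}) and both the restriction Φ|_{ℤ^m} : ℤ^m → ℤ^{m'} and the homomorphism π'∘Φ|_{F_n} : F_n → F_{n'} are bijective. -/

import Mathlib

open Matrix SemidirectProduct

/-- The free abelian group `ℤ^m`, written multiplicatively. -/
abbrev FA (m : ℕ) : Type := Multiplicative (Fin m → ℤ)

/-- The (right) action of `GL_m(ℤ)` on `ℤ^m` (row vectors), as a homomorphism into
`MulAut (ℤ^m)`: the automorphism attached to `M` sends `a` to `a · M⁻¹`, so that in the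
semidirect product below one gets the relation `u⁻¹ tᵃ u = t^(a·A_u)`. -/
def rowAction (m : ℕ) :
    Matrix.GeneralLinearGroup (Fin m) ℤ →* MulAut (FA m) where
  toFun M :=
  { toFun := fun a => Multiplicative.ofAdd
      (Matrix.vecMul (Multiplicative.toAdd a)
        ((↑(M⁻¹) : Matrix (Fin m) (Fin m) ℤ)))
    invFun := fun a => Multiplicative.ofAdd
      (Matrix.vecMul (Multiplicative.toAdd a) ((↑M : Matrix (Fin m) (Fin m) ℤ)))
    left_inv := by
      intro a
      simp [Matrix.vecMul_vecMul]
    right_inv := by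
      intro a
      simp [Matrix.vecMul_vecMul]
    map_mul' := by
      intro a b
      simp [Matrix.add_vecMul] }
  map_one' := by
    ext a
    simp
  map_mul' := by
    intro M N
    ext a
    simp [Matrix.vecMul_vecMul, _root_.mul_inv_rev]

/-- The free-abelian by free group `G_α = F_n ⋉_α ℤ^m` associated to
`α : F_n → GL_m(ℤ)`; it satisfies `u⁻¹ tᵃ u = t^(a·A_u)`. -/
abbrev Gsd {n m : ℕ} (α : FreeGroup (Fin n) →* Matrix.GeneralLinearGroup (Fin m) ℤ) :
    Type :=
  FA m ⋊[(rowAction m).comp α] FreeGroup (Fin n)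

/-- `tA α a` is the element `tᵃ` of the abelian part of `G_α`. -/
def tA {n m : ℕ} (α : FreeGroup (Fin n) →* Matrix.GeneralLinearGroup (Fin m) ℤ)
    (a : Fin m → ℤ) : Gsd α :=
  SemidirectProduct.inl (Multiplicative.ofAdd a)

/-- `fE α u` is the element `u` of the free part of `G_α`. -/
def fE {n m : ℕ} (α : FreeGroup (Fin n) →* Matrix.GeneralLinearGroup (Fin m) ℤ)
    (u : FreeGroup (Fin n)) : Gsd α :=
  SemidirectProduct.inr u

/-- The projection `τ : G_α → ℤ^m`, reading off the abelian part of the normal form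
`g = u · tᵃ` (i.e. `τ (fE α u * tA α a) = a`). -/
def tau {n m : ℕ} (α : FreeGroup (Fin n) →* Matrix.GeneralLinearGroup (Fin m) ℤ)
    (g : Gsd α) : Fin m → ℤ :=
  Matrix.vecMul (Multiplicative.toAdd (SemidirectProduct.left g))
    ((↑(α (SemidirectProduct.right g)) : Matrix (Fin m) (Fin m) ℤ))

/-!
A surjection `Φ : G_α → G_β` maps the normal abelian subgroup `ℤ^m` to a normal abelian
subgroup of `G_β`, whose image `P` in `F_{n'}` is again normal and abelian. By Nielsen–Schreier
`P` is free, hence infinite cyclic `⟨w⟩`; conjugation acts on it by `±1`, so every square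
commutes with `w`. Commuting elements of a free group are powers of a common element, and
comparing exponent sums of `w` with those of `x_i²` and `(x_j x_i)²` forces `w = 1`. Applied to
`Φ` and `Φ⁻¹`, this shows that a bijective `Φ` maps `ℤ^m` onto `ℤ^{m'}`, and what remains is a
five lemma for the two split extensions `ℤ^m → G → F`.
-/

open Subgroup Function

theorem commute_mul_self_of_normal_zpowers {G : Type*} [Group G] [IsMulTorsionFree G] {w : G}
    [hw : (zpowers w).Normal] (u : G) : Commute (u * u) w := by
  obtain ⟨k, hk⟩ := mem_zpowers_iff.1 (hw.conj_mem w (mem_zpowers w) u)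
  obtain ⟨j, hj⟩ := mem_zpowers_iff.1 (hw.conj_mem w (mem_zpowers w) u⁻¹)
  rcases eq_or_ne w 1 with rfl | hw1
  · exact Commute.one_right _
  have hjk : w ^ (j * k - 1) = 1 := by
    rw [_root_.zpow_sub_one, mul_inv_eq_one, _root_.zpow_mul, hj, conj_zpow, hk]
    group
  have hkk : k * k = 1 := by
    rw [IsMulTorsionFree.zpow_eq_one_iff_right hw1, sub_eq_zero] at hjk
    rcases Int.eq_one_or_neg_one_of_mul_eq_one' hjk with ⟨-, rfl⟩ | ⟨-, rfl⟩ <;> rfl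
  refine mul_inv_eq_iff_eq_mul.1 ?_
  calc u * u * w * (u * u)⁻¹ = u * (u * w * u⁻¹) * u⁻¹ := by group
    _ = (u * w * u⁻¹) ^ k := by rw [conj_zpow, ← hk]
    _ = w := by rw [← hk, ← _root_.zpow_mul, hkk, zpow_one]

namespace FreeGroup

variable {α : Type*}

theorem not_commute_of_ne {i j : α} (hij : i ≠ j) : ¬Commute (of i) (of j) := by
  classical
  intro h
  have := h.map (lift fun k => if k = i then Equiv.swap (0 : Fin 3) 1 else Equiv.swap 1 2)
  simp only [lift_apply_of, if_neg hij.symm, if_pos] at this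
  exact absurd this.eq (by decide)

instance isCyclic_of_subsingleton [Subsingleton α] : IsCyclic (FreeGroup α) := by
  cases isEmpty_or_nonempty α
  · infer_instance
  · have := uniqueOfSubsingleton (Classical.arbitrary α)
    infer_instance

end FreeGroup

namespace IsFreeGroup

theorem isCyclic_of_isMulCommutative (G : Type*) [Group G] [IsFreeGroup G] [IsMulCommutative G] :
    IsCyclic G := by
  have : Subsingleton (Generators G) := ⟨fun s t => by
    by_contra hst
    have h : Commute ((toFreeGroup G).symm (.of s)) ((toFreeGroup G).symm (.of t)) :=
      mul_comm' _ _
    exact FreeGroup.not_commute_of_ne hst (by simpa using h.map (toFreeGroup G))⟩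
  exact isCyclic_of_surjective (toFreeGroup G).symm (toFreeGroup G).symm.surjective

end IsFreeGroup

namespace FreeGroup

variable {α : Type*}

theorem exists_zpow_eq_of_commute {a b : FreeGroup α} (h : Commute a b) :
    ∃ z : FreeGroup α, ∃ p q : ℤ, z ^ p = a ∧ z ^ q = b := by
  have : IsMulCommutative (closure {a, b}) := isMulCommutative_closure (by
    rintro x (rfl | rfl) y (rfl | rfl) <;> first | rfl | exact h | exact h.symm)
  obtain ⟨z, hz⟩ := (closure {a, b}).isCyclic_iff_exists_zpowers_eq_top.1
    (IsFreeGroup.isCyclic_of_isMulCommutative _)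
  obtain ⟨p, hp⟩ := mem_zpowers_iff.1 (hz ▸ subset_closure (by simp) : a ∈ zpowers z)
  obtain ⟨q, hq⟩ := mem_zpowers_iff.1 (hz ▸ subset_closure (by simp) : b ∈ zpowers z)
  exact ⟨z, p, q, hp, hq⟩

section TorsionFree

variable {H : Type*} [Group H] [IsMulTorsionFree H] {w v : FreeGroup α}

theorem map_eq_one_of_commute (h : Commute w v) {f g : FreeGroup α →* H} (hf : f v = 1)
    (hg : g v ≠ 1) : f w = 1 := by
  obtain ⟨z, p, q, rfl, rfl⟩ := exists_zpow_eq_of_commute h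
  have hq : q ≠ 0 := by rintro rfl; simp at hg
  rw [map_zpow, IsMulTorsionFree.zpow_eq_one_iff_left hq] at hf
  rw [map_zpow, hf, _root_.one_zpow]

theorem eq_one_of_commute (h : Commute w v) {f : FreeGroup α →* H} (hw : f w = 1)
    (hv : f v ≠ 1) : w = 1 := by
  obtain ⟨z, p, q, rfl, rfl⟩ := exists_zpow_eq_of_commute h
  have hz : f z ≠ 1 := by rintro hz; simp [hz] at hv
  rw [map_zpow, IsMulTorsionFree.zpow_eq_one_iff_right hz] at hw
  rw [hw, zpow_zero]

end TorsionFree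

theorem eq_bot_of_normal_of_isMulCommutative [Nontrivial α] (P : Subgroup (FreeGroup α))
    [P.Normal] [IsMulCommutative P] : P = ⊥ := by
  classical
  obtain ⟨w, rfl⟩ := P.isCyclic_iff_exists_zpowers_eq_top.1
    (IsFreeGroup.isCyclic_of_isMulCommutative P)
  obtain ⟨i, j, hij⟩ := exists_pair_ne α
  let expSum (k : α) : FreeGroup α →* Multiplicative ℤ :=
    lift fun l => if l = k then Multiplicative.ofAdd 1 else 1
  -- `w` commutes with `x_i²` and `(x_j x_i)²`: the first kills the `x_j`-exponent sum of `w`,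
  -- and then the second kills `w`.
  have hj : expSum j w = 1 :=
    map_eq_one_of_commute (commute_mul_self_of_normal_zpowers (of i)).symm
      (g := expSum i) (by simp [expSum, hij]) (by simp [expSum]; decide)
  rw [zpowers_eq_bot]
  exact eq_one_of_commute (commute_mul_self_of_normal_zpowers (of j * of i)).symm hj
    (by simp [expSum, hij]; decide)

end FreeGroup

namespace SemidirectProduct

theorem right_map_inl_eq_one_of_surjective {N G N' α : Type*} [CommGroup N] [Group G]
    [Group N'] [Nontrivial α] {φ : G →* MulAut N} {φ' : FreeGroup α →* MulAut N'}
    (Φ : N ⋊[φ] G →* N' ⋊[φ'] FreeGroup α) (hΦ : Surjective Φ) (n : N) :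
    (Φ (inl n)).right = 1 := by
  have : (inl : N →* N ⋊[φ] G).range.Normal := by
    rw [range_inl_eq_ker_rightHom]
    infer_instance
  have : ((inl : N →* N ⋊[φ] G).range.map (rightHom.comp Φ)).Normal :=
    this.map _ (rightHom_surjective.comp hΦ)
  have hbot := FreeGroup.eq_bot_of_normal_of_isMulCommutative
    ((inl : N →* N ⋊[φ] G).range.map (rightHom.comp Φ))
  exact (Subgroup.map_eq_bot_iff _).1 hbot ⟨n, rfl⟩

variable {N G N' G' : Type*} [Group N] [Group G] [Group N'] [Group G']
  {φ : G →* MulAut N} {φ' : G' →* MulAut N'}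

theorem inl_left_of_right_eq_one {x : N ⋊[φ] G} (h : x.right = 1) : inl x.left = x := by
  ext <;> simp [h]

variable {Φ : N ⋊[φ] G →* N' ⋊[φ'] G'}

theorem injective_of_injective_left_right (hΦ : ∀ n, (Φ (inl n)).right = 1)
    (hN : Injective fun n => (Φ (inl n)).left) (hG : Injective fun g => (Φ (inr g)).right) :
    Injective Φ := by
  refine (injective_iff_map_eq_one Φ).2 fun x hx => ?_
  rw [← inl_left_mul_inr_right x, map_mul] at hx
  have hright : x.right = 1 := hG <| by simpa [hΦ] using congrArg right hx
  have hleft : x.left = 1 := hN <| by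
    simpa [hright] using congrArg left hx
  ext <;> simp [hleft, hright]

theorem surjective_of_surjective_left_right (hΦ : ∀ n, (Φ (inl n)).right = 1)
    (hN : Surjective fun n => (Φ (inl n)).left) (hG : Surjective fun g => (Φ (inr g)).right) :
    Surjective Φ := by
  intro y
  obtain ⟨g, hg⟩ := hG y.right
  obtain ⟨n, hn⟩ := hN (y.left * (Φ (inr g)).left⁻¹)
  refine ⟨inl n * inr g, ?_⟩
  ext
  · simp [hn, hΦ]
  · simp [hg, hΦ]

theorem bijective_left_right_of_mulEquiv (e : N ⋊[φ] G ≃* N' ⋊[φ'] G')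
    (he : ∀ n, (e (inl n)).right = 1) (he' : ∀ n', (e.symm (inl n')).right = 1) :
    Bijective (fun n => (e (inl n)).left) ∧ Bijective (fun g => (e (inr g)).right) := by
  refine ⟨⟨fun a b h => ?_, fun n' => ⟨(e.symm (inl n')).left, ?_⟩⟩, ⟨?_, fun g' => ?_⟩⟩
  · refine inl_injective (e.injective ?_)
    rw [← inl_left_of_right_eq_one (he a), ← inl_left_of_right_eq_one (he b)]
    exact congrArg inl h
  · simp only [inl_left_of_right_eq_one (he' n'), MulEquiv.apply_symm_apply, left_inl]
  · refine (injective_iff_map_eq_one (rightHom.comp (e.toMonoidHom.comp inr))).2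
      fun g (hg : (e (inr g)).right = 1) => ?_
    calc g = (e.symm (e (inr g))).right := by simp
      _ = 1 := by rw [← inl_left_of_right_eq_one hg]; exact he' _
  · refine ⟨(e.symm (inr g')).right, ?_⟩
    have h := congrArg (fun x => (e x).right) (inl_left_mul_inr_right (e.symm (inr g')))
    simpa only [map_mul, mul_right, he, one_mul, MulEquiv.apply_symm_apply, right_inr] using h

end SemidirectProduct

section

variable {n m n' m' : ℕ} {α : FreeGroup (Fin n) →* Matrix.GeneralLinearGroup (Fin m) ℤ}
  {β : FreeGroup (Fin n') →* Matrix.GeneralLinearGroup (Fin m') ℤ} {Φ : Gsd α →* Gsd β}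

theorem forall_exists_map_tA_eq_tA_iff :
    (∀ a, ∃ b, Φ (tA α a) = tA β b) ↔ ∀ x, (Φ (inl x)).right = 1 := by
  refine ⟨fun h x => ?_, fun h a => ⟨Multiplicative.toAdd (Φ (tA α a)).left, ?_⟩⟩
  · obtain ⟨b, hb⟩ := h (Multiplicative.toAdd x)
    exact (congrArg right hb).trans (right_inl _)
  · exact (inl_left_of_right_eq_one (h _)).symm

theorem bijective_tau_map_tA_iff (hΦ : ∀ x, (Φ (inl x)).right = 1) :
    Bijective (fun a => tau β (Φ (tA α a))) ↔ Bijective fun x => (Φ (inl x)).left := by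
  have : (fun a => tau β (Φ (tA α a))) =
      Multiplicative.toAdd ∘ (fun x => (Φ (inl x)).left) ∘ Multiplicative.ofAdd := by
    ext a : 1
    simp [tau, tA, hΦ]
  rw [this, Equiv.comp_bijective, Equiv.bijective_comp]

end

theorem bijective_iff_general {n m n' m' : ℕ} (hn : 2 ≤ n) (hn' : 2 ≤ n')
    (α : FreeGroup (Fin n) →* Matrix.GeneralLinearGroup (Fin m) ℤ)
    (β : FreeGroup (Fin n') →* Matrix.GeneralLinearGroup (Fin m') ℤ)
    (Φ : Gsd α →* Gsd β) :
    Function.Bijective Φ ↔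
      ((∀ a : Fin m → ℤ, ∃ b : Fin m' → ℤ, Φ (tA α a) = tA β b) ∧
        Function.Bijective (fun a : Fin m → ℤ => tau β (Φ (tA α a))) ∧
        Function.Bijective
          (fun u : FreeGroup (Fin n) => SemidirectProduct.rightHom (Φ (fE α u)))) := by
  have : Nontrivial (Fin n) := Fin.nontrivial_iff_two_le.2 hn
  have : Nontrivial (Fin n') := Fin.nontrivial_iff_two_le.2 hn'
  rw [forall_exists_map_tA_eq_tA_iff]
  constructor
  · intro hΦ
    let e := MulEquiv.ofBijective Φ hΦ
    have hI := right_map_inl_eq_one_of_surjective Φ hΦ.2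
    have hI' := right_map_inl_eq_one_of_surjective e.symm.toMonoidHom e.symm.surjective
    obtain ⟨hN, hG⟩ := bijective_left_right_of_mulEquiv e hI hI'
    exact ⟨hI, (bijective_tau_map_tA_iff hI).2 hN, hG⟩
  · rintro ⟨hI, hN, hG⟩
    rw [bijective_tau_map_tA_iff hI] at hN
    exact ⟨injective_of_injective_left_right hI hN.1 hG.1,
      surjective_of_surjective_left_right hI hN.2 hG.2⟩

/-- `Φ : G_α → G_β` is bijective iff it is of type I with both `Φ|_{ℤ^m}` and
`π'∘Φ|_{F_n}` bijective. -/
theorem bijective_iff {n m n' m' : ℕ} (hn : 2 ≤ n) (hm : 1 ≤ m)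
    (hn' : 2 ≤ n') (hm' : 1 ≤ m')
    (α : FreeGroup (Fin n) →* Matrix.GeneralLinearGroup (Fin m) ℤ)
    (β : FreeGroup (Fin n') →* Matrix.GeneralLinearGroup (Fin m') ℤ)
    (Φ : Gsd α →* Gsd β) :
    Function.Bijective Φ ↔
      ((∀ a : Fin m → ℤ, ∃ b : Fin m' → ℤ, Φ (tA α a) = tA β b) ∧
        Function.Bijective (fun a : Fin m → ℤ => tau β (Φ (tA α a))) ∧
        Function.Bijective
          (fun u : FreeGroup (Fin n) => SemidirectProduct.rightHom (Φ (fE α u)))) :=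
  bijective_iff_general hn hn' α β Φ
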